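/- If X ∈ Sp(4,ℤ) has finite order and its characteristic polynomial is x^4 + (5*m+1)*x^3 + (5*n+1)*x^2 + (5*m+1)*x + 1 for some integers m, n, and X is not the identity matrix, then X^5 = 1. -/

import Mathlib

/-!
The eigenvalues of `X` are roots of unity, so the first two power sums of the eigenvalues,
`-(5m + 1)` and `(5m + 1)² - 2(5n + 1)`, have absolute value at most `4`. This leaves
`(m, n) = (0, 0)`, where the characteristic polynomial is `1 + x + x² + x³ + x⁴` and
Cayley–Hamilton gives `X⁵ = 1`, and `(m, n) = (-1, 1)`, where it is `(x - 1)⁴`: then `X - 1` is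
nilpotent, and a unipotent matrix of finite order over the torsion-free ring `ℤ` is `1`.
-/

open Matrix Polynomial

/-- The standard symplectic form matrix. -/
def Jsym : Matrix (Fin 4) (Fin 4) ℤ :=
  !![0, 0, 1, 0; 0, 0, 0, 1; -1, 0, 0, 0; 0, -1, 0, 0]

instance Matrix.instIsAddTorsionFree {m n α : Type*} [AddMonoid α] [IsAddTorsionFree α] :
    IsAddTorsionFree (Matrix m n α) :=
  Pi.instIsAddTorsionFree

section Unipotent

variable {R : Type*} [Ring R]

lemma pow_mul_one_add_pow_of_pow_succ_eq_zero {N : R} {i : ℕ} (h : N ^ (i + 1) = 0) (j : ℕ) :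
    N ^ i * (1 + N) ^ j = N ^ i := by
  induction j with
  | zero => rw [pow_zero, mul_one]
  | succ j ih => rw [pow_succ, ← mul_assoc, ih, mul_add, mul_one, ← pow_succ, h, add_zero]

lemma IsNilpotent.eq_zero_of_isOfFinOrder_one_add [IsAddTorsionFree R] {N : R}
    (hN : IsNilpotent N) (hfin : IsOfFinOrder (1 + N)) : N = 0 := by
  obtain ⟨k, hk, hpow⟩ := isOfFinOrder_iff_pow_eq_one.mp hfin
  have step : ∀ i, N ^ (i + 2) = 0 → N ^ (i + 1) = 0 := fun i hi ↦ by
    apply nsmul_right_injective hk.ne'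
    calc k • N ^ (i + 1) = N ^ (i + 1) * ∑ j ∈ Finset.range k, (1 + N) ^ j := by
          simp [Finset.mul_sum, pow_mul_one_add_pow_of_pow_succ_eq_zero hi]
      _ = N ^ i * ((1 + N) ^ k - 1) := by
          rw [← mul_geom_sum, add_sub_cancel_left, _root_.pow_succ, mul_assoc]
      _ = k • 0 := by rw [hpow, sub_self, mul_zero, smul_zero]
  obtain ⟨r, hr⟩ := hN
  suffices ∀ i, N ^ (i + 1) = 0 → N = 0 from
    this r (by rw [_root_.pow_succ, hr, zero_mul])
  intro i hi
  induction i with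
  | zero => simpa using hi
  | succ i ih => exact ih (step i hi)

end Unipotent

section Charpoly

variable {n : Type*} [Fintype n] [DecidableEq n]

lemma Matrix.norm_eq_one_of_isRoot_charpoly {K : Type*} [NormedField K] {A : Matrix n n K}
    (hA : IsOfFinOrder A) {ρ : K} (hρ : A.charpoly.IsRoot ρ) : ‖ρ‖ = 1 := by
  obtain ⟨k, hk, hpow⟩ := isOfFinOrder_iff_pow_eq_one.mp hA
  have hρk : ρ ^ k ∈ spectrum K (A ^ k) :=
    spectrum.pow_mem_pow A k (mem_spectrum_iff_isRoot_charpoly.mpr hρ)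
  rcases isEmpty_or_nonempty n with _ | _
  · simp [charpoly_isEmpty] at hρ
  rw [hpow, spectrum.one_eq, Set.mem_singleton_iff] at hρk
  exact (pow_eq_one_iff_of_nonneg (norm_nonneg ρ) hk.ne').mp (by rw [← norm_pow, hρk, norm_one])

lemma Matrix.pow_eq_one_of_charpoly_eq_geom_sum {R : Type*} [CommRing R] {A : Matrix n n R}
    {k : ℕ} (h : A.charpoly = ∑ i ∈ Finset.range k, X ^ i) : A ^ k = 1 := by
  have hsum : ∑ i ∈ Finset.range k, A ^ i = 0 := by
    simpa [h, map_sum] using aeval_self_charpoly A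
  rw [← sub_eq_zero, ← mul_geom_sum, hsum, mul_zero]

lemma Matrix.eq_one_of_charpoly_eq_X_sub_one_pow {R : Type*} [CommRing R] [IsAddTorsionFree R]
    {A : Matrix n n R} (hA : IsOfFinOrder A) {k : ℕ} (h : A.charpoly = (X - 1) ^ k) : A = 1 := by
  have hnil : IsNilpotent (A - 1) := ⟨k, by simpa [h] using aeval_self_charpoly A⟩
  rw [← sub_eq_zero]
  exact hnil.eq_zero_of_isOfFinOrder_one_add (by rwa [add_sub_cancel])

end Charpoly

lemma quartic_coeff_three_and_coeff_two {R : Type*} [CommRing R] (w x y z : R) :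
    ((X - C w) * (X - C x) * (X - C y) * (X - C z)).coeff 3 = -(w + x + y + z) ∧
      ((X - C w) * (X - C x) * (X - C y) * (X - C z)).coeff 2 =
        w * x + w * y + w * z + x * y + x * z + y * z := by
  have hexp : (X - C w) * (X - C x) * (X - C y) * (X - C z) =
      X ^ 4 - C (w + x + y + z) * X ^ 3 + C (w * x + w * y + w * z + x * y + x * z + y * z) * X ^ 2
        - C (w * x * y + w * x * z + w * y * z + x * y * z) * X + C (w * x * y * z) := by
    simp only [map_add, map_mul]; ring
  rw [hexp]
  simp only [coeff_add, coeff_sub, coeff_C_mul, coeff_X_pow, coeff_X, coeff_C]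
  norm_num

lemma norm_pow_add_le_four {K : Type*} [NormedField K] {w x y z : K} (hw : ‖w‖ = 1) (hx : ‖x‖ = 1)
    (hy : ‖y‖ = 1) (hz : ‖z‖ = 1) (j : ℕ) : ‖w ^ j + x ^ j + y ^ j + z ^ j‖ ≤ 4 :=
  norm_add₄_le.trans_eq (by simp [norm_pow, hw, hx, hy, hz]; norm_num)

lemma Matrix.abs_charpoly_coeff_le_four_of_isOfFinOrder {A : Matrix (Fin 4) (Fin 4) ℤ}
    (hA : IsOfFinOrder A) :
    |A.charpoly.coeff 3| ≤ 4 ∧ |A.charpoly.coeff 3 ^ 2 - 2 * A.charpoly.coeff 2| ≤ 4 := by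
  set B := A.map (Int.castRingHom ℂ)
  have hB : IsOfFinOrder B :=
    ((Int.castRingHom ℂ).mapMatrix : Matrix (Fin 4) (Fin 4) ℤ →+* _).toMonoidHom.isOfFinOrder hA
  have hsplit : B.charpoly.Splits := IsAlgClosed.splits _
  have hcard : B.charpoly.roots.card = 4 := by
    rw [splits_iff_card_roots.mp hsplit, charpoly_natDegree_eq_dim, Fintype.card_fin]
  obtain ⟨w, x, y, z, hroots⟩ := Multiset.card_eq_four.mp hcard
  have hnorm : ∀ ρ ∈ B.charpoly.roots, ‖ρ‖ = 1 := fun ρ hρ ↦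
    B.norm_eq_one_of_isRoot_charpoly hB (isRoot_of_mem_roots hρ)
  have hbound := norm_pow_add_le_four (hnorm w (by simp [hroots])) (hnorm x (by simp [hroots]))
    (hnorm y (by simp [hroots])) (hnorm z (by simp [hroots]))
  have hprod :
      A.charpoly.map (Int.castRingHom ℂ) = (X - C w) * (X - C x) * (X - C y) * (X - C z) := by
    rw [← charpoly_map, hsplit.eq_prod_roots_of_monic (charpoly_monic B), hroots]
    simp [mul_assoc]
  obtain ⟨h3, h2⟩ := quartic_coeff_three_and_coeff_two w x y z
  rw [← hprod, coeff_map, eq_intCast] at h3 h2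
  have hcast : ∀ t : ℤ, ‖(t : ℂ)‖ ≤ 4 → |t| ≤ 4 := fun t ht ↦ by
    rw [Complex.norm_intCast] at ht
    exact_mod_cast ht
  constructor
  · exact hcast _ (by rw [h3, norm_neg]; simpa using hbound 1)
  · refine hcast _ ?_
    push_cast
    rw [h3, h2]
    exact (le_of_eq (by ring_nf)).trans (hbound 2)

theorem pow_five_eq_one_of_finite_order (X : Matrix (Fin 4) (Fin 4) ℤ)
    (hfin : IsOfFinOrder X)
    (hchar : ∃ m n : ℤ,
      X.charpoly =
        Polynomial.X ^ 4 + C (5 * m + 1) * Polynomial.X ^ 3 + C (5 * n + 1) * Polynomial.X ^ 2 +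
          C (5 * m + 1) * Polynomial.X + 1)
    (hne : X ≠ 1) :
    X ^ 5 = 1 := by
  obtain ⟨m, n, hchar⟩ := hchar
  obtain ⟨hm, hn⟩ := X.abs_charpoly_coeff_le_four_of_isOfFinOrder hfin
  simp only [hchar, coeff_add, coeff_C_mul, coeff_X_pow, coeff_X, coeff_one] at hm hn
  norm_num [abs_le] at hm hn
  obtain rfl | rfl : m = 0 ∨ m = -1 := by omega
  · obtain rfl : n = 0 := by omega
    exact X.pow_eq_one_of_charpoly_eq_geom_sum (by simp [hchar, Finset.sum_range_succ]; ring)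
  · obtain rfl : n = 1 := by omega
    refine absurd (X.eq_one_of_charpoly_eq_X_sub_one_pow hfin (k := 4) ?_) hne
    rw [hchar]
    norm_num
    ring
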